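/- arXiv:2601.01120 — 3 statements merged into one kernel-verified Lean document; each statement's English description precedes it below -/
import Mathlib

section
/- A finite simple graph G is P₄-free if and only if every connected component of G with at least two vertices is isomorphic to the join of two (nonempty) P₄-free graphs. -/
/-!
The forward direction rests on Seinsche's theorem: a connected `P₄`-free graph `G` on at least
two vertices has a disconnected complement. Then a component `A` of `Gᶜ` is joined to every vertex
outside it, so `G` is the join of `G[A]` and `G[Aᶜ]`. Seinsche's theorem is proved by induction on
the number of vertices. Suppose `G` and `Gᶜ` are both connected and delete any vertex `v`. If
`G - v` and its complement were both connected, `G - v` would contain a `P₄` by induction; since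
`P₄` is self-complementary it remains to rule out that `G - v` is disconnected. In that case take
a non-neighbour `u` of `v`: along a path from `u` to a neighbour of `v` inside its
component of `G - v` there is an edge `p q` with `p ≁ v`, `q ~ v`, and any neighbour `t` of `v` in
another component gives the induced path `p - q - v - t`.

Conversely, the three non-edges of `P₄` connect its four vertices, so an induced `P₄` in a join
lies on one side; and `P₄` is connected, so it lies in one component.
-/

open SimpleGraph

/-- The join of two graphs on disjoint vertex sets: disjoint union plus all cross edges. -/
def gJoin {α β : Type*} (G : SimpleGraph α) (H : SimpleGraph β) : SimpleGraph (α ⊕ β) where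
  Adj x y := match x, y with
    | Sum.inl a, Sum.inl b => G.Adj a b
    | Sum.inr a, Sum.inr b => H.Adj a b
    | Sum.inl _, Sum.inr _ => True
    | Sum.inr _, Sum.inl _ => True
  symm := ⟨by rintro (a|a) (b|b) h <;> first | exact h.symm | trivial⟩
  loopless := ⟨by rintro (a|a) h; exacts [G.irrefl h, H.irrefl h]⟩

/-- A graph is `P₄`-free if it has no induced subgraph isomorphic to the path on 4 vertices. -/
def P4Free {V : Type*} (G : SimpleGraph V) : Prop :=
  IsEmpty (SimpleGraph.pathGraph 4 ↪g G)

/-- `T` is a connected dominating set of `G`. -/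
def IsConnDomSet {V : Type*} (G : SimpleGraph V) (T : Set V) : Prop :=
  T.Nonempty ∧ (G.induce T).Connected ∧ ∀ u ∉ T, ∃ t ∈ T, G.Adj u t

/-- `T` is a minimum connected dominating set of `G`. -/
def IsMinConnDomSet {V : Type*} (G : SimpleGraph V) (T : Set V) : Prop :=
  IsConnDomSet G T ∧ ∀ T' : Set V, IsConnDomSet G T' → T.ncard ≤ T'.ncard

/-- The graph `K₁ ⊔ K₂`: three vertices, exactly one edge (between 0 and 1). -/
def graphK1K2 : SimpleGraph (Fin 3) := SimpleGraph.fromRel (fun a b => a = 0 ∧ b = 1)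

/-- The star `K_{1,3}`: vertex 0 adjacent to 1, 2, 3. -/
def graphK13 : SimpleGraph (Fin 4) := SimpleGraph.fromRel (fun a _ => a = 0)

/-- The graph `B = K₁ * (K₁ ⊔ K₂)`: vertex 0 adjacent to all, plus the edge 2-3. -/
def graphB : SimpleGraph (Fin 4) := SimpleGraph.fromRel (fun a b => a = 0 ∨ (a = 2 ∧ b = 3))

variable {V W : Type*} {G : SimpleGraph V} {H : SimpleGraph W}

theorem SimpleGraph.compl_induce (G : SimpleGraph V) (s : Set V) :
    (G.induce s)ᶜ = Gᶜ.induce s := by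
  ext a b
  simp [compl_adj, Subtype.ext_iff]

theorem SimpleGraph.Reachable.exists_adj_mem_notMem {S : Set V} {x y : V}
    (h : G.Reachable x y) (hx : x ∈ S) (hy : y ∉ S) :
    ∃ a b, G.Reachable x a ∧ G.Adj a b ∧ a ∈ S ∧ b ∉ S := by
  classical
  obtain ⟨p⟩ := h
  obtain ⟨d, hd, hS⟩ := p.exists_boundary_dart S hx hy
  exact ⟨d.fst, d.snd, ⟨p.takeUntil d.fst (p.dart_fst_mem_support_of_mem_darts hd)⟩, d.adj, hS⟩

theorem SimpleGraph.Preconnected.exists_reachable_induce_compl_singleton_adj {v : V}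
    (hG : G.Preconnected) (x : ({v}ᶜ : Set V)) :
    ∃ w : ({v}ᶜ : Set V), (G.induce {v}ᶜ).Reachable x w ∧ G.Adj w v := by
  obtain ⟨-, b, -, hab, ⟨w, hxw, rfl⟩, hb⟩ := (hG x v).exists_adj_mem_notMem
    (S := Subtype.val '' {w | (G.induce {v}ᶜ).Reachable x w}) ⟨x, .rfl, rfl⟩
    (fun ⟨w, _, hw⟩ => w.prop hw)
  by_cases hbv : b = v
  · exact ⟨w, hxw, hbv ▸ hab⟩
  · have hwb : (G.induce {v}ᶜ).Adj w ⟨b, hbv⟩ := hab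
    exact absurd ⟨_, hxw.trans hwb.reachable, rfl⟩ hb

theorem SimpleGraph.Preconnected.exists_boundary_adj_induce_compl_singleton {v : V}
    (hG : G.Preconnected) (u : ({v}ᶜ : Set V)) (hu : ¬G.Adj u v) :
    ∃ p q : ({v}ᶜ : Set V), (G.induce {v}ᶜ).Reachable u p ∧ (G.induce {v}ᶜ).Adj p q ∧
      ¬G.Adj p v ∧ G.Adj q v := by
  obtain ⟨w, huw, hwv⟩ := hG.exists_reachable_induce_compl_singleton_adj u
  obtain ⟨p, q, hup, hpq, hp, hq⟩ :=
    huw.exists_adj_mem_notMem (S := {y : ({v}ᶜ : Set V) | ¬G.Adj y v}) hu (not_not.2 hwv)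
  exact ⟨p, q, hup, hpq, hp, not_not.1 hq⟩

-- `a - b - c - d` is an induced path; the four vertices are distinct because of the adjacencies.
def IsInducedP4 (G : SimpleGraph V) (a b c d : V) : Prop :=
  G.Adj a b ∧ G.Adj b c ∧ G.Adj c d ∧ ¬G.Adj a c ∧ ¬G.Adj a d ∧ ¬G.Adj b d

theorem pathGraph_four_eq_of_forall_adj_iff {i j : Fin 4}
    (h : ∀ k, (pathGraph 4).Adj i k ↔ (pathGraph 4).Adj j k) : i = j := by
  revert i j
  simp only [pathGraph_adj]
  decide

theorem IsInducedP4.isIndContained {a b c d : V} (h : IsInducedP4 G a b c d) :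
    pathGraph 4 ⊴ G := by
  obtain ⟨hab, hbc, hcd, hac, had, hbd⟩ := h
  have hadj : ∀ i j, G.Adj (![a, b, c, d] i) (![a, b, c, d] j) ↔ (pathGraph 4).Adj i j := by
    intro i j
    fin_cases i <;> fin_cases j <;>
      simp [pathGraph_adj, hab, hbc, hcd, hab.symm, hbc.symm, hcd.symm, hac, had, hbd,
        G.adj_comm c a, G.adj_comm d a, G.adj_comm d b]
  refine ⟨⟨⟨![a, b, c, d], fun i j hij => pathGraph_four_eq_of_forall_adj_iff fun k => ?_⟩,
    hadj _ _⟩⟩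
  rw [← hadj, ← hadj, hij]

theorem p4Free_iff_not_isIndContained : P4Free G ↔ ¬pathGraph 4 ⊴ G :=
  not_nonempty_iff.symm

theorem IsInducedP4.not_p4Free {a b c d : V} (h : IsInducedP4 G a b c d) : ¬P4Free G :=
  p4Free_iff_not_isIndContained.not_left.2 h.isIndContained

theorem p4Free_iff_forall_not_isInducedP4 : P4Free G ↔ ∀ a b c d, ¬IsInducedP4 G a b c d := by
  refine ⟨fun hP a b c d h => h.not_p4Free hP, fun h => ⟨fun e => h (e 0) (e 1) (e 2) (e 3) ?_⟩⟩
  simp only [IsInducedP4, e.map_adj_iff, pathGraph_adj]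
  decide

theorem P4Free.anti (hH : P4Free H) (h : G ⊴ H) : P4Free G :=
  ⟨fun e => hH.false (h.some.comp e)⟩

theorem P4Free.induce (hP : P4Free G) (s : Set V) : P4Free (G.induce s) :=
  hP.anti (Embedding.induce s).isIndContained

theorem pathGraph_four_isIndContained_compl : pathGraph 4 ⊴ (pathGraph 4)ᶜ := by
  refine IsInducedP4.isIndContained (a := 1) (b := 3) (c := 0) (d := 2) ?_
  simp only [IsInducedP4, compl_adj, pathGraph_adj]
  decide

theorem P4Free.compl (hP : P4Free G) : P4Free Gᶜ :=
  p4Free_iff_not_isIndContained.2 fun h => p4Free_iff_not_isIndContained.1 hP <|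
    pathGraph_four_isIndContained_compl.trans (compl_compl G ▸ h.compl)

theorem P4Free.gJoin {H₁ : SimpleGraph V} {H₂ : SimpleGraph W} (h₁ : P4Free H₁)
    (h₂ : P4Free H₂) : P4Free (gJoin H₁ H₂) := by
  rw [p4Free_iff_forall_not_isInducedP4] at *
  rintro (a | a) (b | b) (c | c) (d | d) ⟨hab, hbc, hcd, hac, had, hbd⟩ <;>
    first
    | exact hac trivial
    | exact had trivial
    | exact hbd trivial
    | exact h₁ a b c d ⟨hab, hbc, hcd, hac, had, hbd⟩
    | exact h₂ a b c d ⟨hab, hbc, hcd, hac, had, hbd⟩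

theorem P4Free.preconnected_induce_compl_singleton (hP : P4Free G) (hG : G.Connected)
    (hGc : Gᶜ.Connected) (v : V) : (G.induce {v}ᶜ).Preconnected := by
  intro x y
  by_contra hxy
  have : Nontrivial V := ⟨⟨v, x, Ne.symm x.prop⟩⟩
  obtain ⟨u, hvu⟩ := hGc.preconnected.exists_adj_of_nontrivial v
  set u' : ({v}ᶜ : Set V) := ⟨u, hvu.ne.symm⟩
  obtain ⟨z, hz⟩ : ∃ z, ¬(G.induce {v}ᶜ).Reachable u' z := by
    by_cases hx : (G.induce {v}ᶜ).Reachable u' x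
    · exact ⟨y, fun hy => hxy (hx.symm.trans hy)⟩
    · exact ⟨x, hx⟩
  obtain ⟨p, q, hup, hpq, hpv, hqv⟩ :=
    hG.preconnected.exists_boundary_adj_induce_compl_singleton u' fun h => hvu.2 h.symm
  obtain ⟨t, hzt, htv⟩ := hG.preconnected.exists_reachable_induce_compl_singleton_adj z
  have hfar : ∀ s, (G.induce {v}ᶜ).Reachable u' s → ¬G.Adj s t := fun s hs hst =>
    hz (hs.trans ((show (G.induce {v}ᶜ).Adj s t from hst).reachable.trans hzt.symm))
  -- `t` lies in another component of `G - v` than `p` and `q`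
  have hP4 : IsInducedP4 G p q v t :=
    ⟨hpq, hqv, htv.symm, hpv, hfar p hup, hfar q (hup.trans hpq.reachable)⟩
  exact hP4.not_p4Free hP

theorem P4Free.not_connected_compl [Finite V] [Nontrivial V] (hP : P4Free G)
    (hG : G.Connected) : ¬Gᶜ.Connected := by
  induction h : Nat.card V using Nat.strong_induction_on generalizing V with
  | _ n ih =>
  intro hGc
  obtain ⟨v⟩ := ‹Nontrivial V›.to_nonempty
  have hpre := hP.preconnected_induce_compl_singleton hG hGc v
  have hpre' := hP.compl.preconnected_induce_compl_singleton hGc (by rwa [compl_compl]) v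
  rcases subsingleton_or_nontrivial ({v}ᶜ : Set V) with hs | hs
  · -- the only other vertex would be both a neighbour and a non-neighbour of `v`
    obtain ⟨w, hvw⟩ := hG.preconnected.exists_adj_of_nontrivial v
    obtain ⟨w', hvw'⟩ := hGc.preconnected.exists_adj_of_nontrivial v
    have hww' : w = w' := congrArg Subtype.val
      (Subsingleton.elim (⟨w, hvw.ne'⟩ : ({v}ᶜ : Set V)) ⟨w', hvw'.ne'⟩)
    exact hvw'.2 (hww' ▸ hvw)
  · refine ih _ (h ▸ Finite.card_subtype_lt (x := v) (by simp)) (hP.induce _) ⟨hpre⟩ rfl ?_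
    rw [compl_induce]
    exact ⟨hpre'⟩

theorem SimpleGraph.IsIndContained.exists_induce_supp {G' : SimpleGraph W}
    (hG' : G'.Connected) (h : G' ⊴ G) : ∃ c : G.ConnectedComponent, G' ⊴ G.induce c.supp := by
  obtain ⟨f⟩ := h
  obtain ⟨w⟩ := hG'.nonempty
  refine ⟨G.connectedComponentMk (f w), ?_⟩
  have hsub : Set.range f ⊆ (G.connectedComponentMk (f w)).supp := by
    rintro _ ⟨x, rfl⟩
    exact ConnectedComponent.sound ((hG'.preconnected w x).map f.toHom).symm
  exact ⟨(G.induceHomOfLE hsub).comp f.isoInduceRange.toEmbedding⟩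

theorem p4Free_of_forall_induce_supp
    (h : ∀ c : G.ConnectedComponent, c.supp.Nontrivial → P4Free (G.induce c.supp)) :
    P4Free G := by
  refine p4Free_iff_not_isIndContained.2 fun hP => ?_
  obtain ⟨c, ⟨e⟩⟩ := hP.exists_induce_supp (pathGraph_connected 3)
  have : Nontrivial c.supp := e.injective.nontrivial
  exact (h c (Set.nontrivial_coe_sort.1 this)).false e

def isoGJoinInduce (A : Set V) [DecidablePred (· ∈ A)]
    (hA : ∀ a ∈ A, ∀ b ∉ A, G.Adj a b) :
    G ≃g gJoin (G.induce A) (G.induce Aᶜ) :=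
  RelIso.symm ⟨Equiv.sumCompl (· ∈ A), by
    rintro (a | a) (b | b)
    · exact Iff.rfl
    · exact iff_of_true (hA a a.prop b b.prop) trivial
    · exact iff_of_true (hA b b.prop a a.prop).symm trivial
    · exact Iff.rfl⟩

theorem exists_iso_gJoin_of_not_preconnected_compl (h : ¬Gᶜ.Preconnected) :
    ∃ A : Set V, A.Nonempty ∧ Aᶜ.Nonempty ∧
      Nonempty (G ≃g gJoin (G.induce A) (G.induce Aᶜ)) := by
  classical
  obtain ⟨x, y, hxy⟩ : ∃ x y, ¬Gᶜ.Reachable x y := by simpa [Preconnected] using h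
  refine ⟨{z | Gᶜ.Reachable x z}, ⟨x, .rfl⟩, ⟨y, hxy⟩, ⟨isoGJoinInduce _ fun a ha b hb => ?_⟩⟩
  by_contra hab
  exact hb (ha.trans ((compl_adj G a b).2 ⟨fun h => hb (h ▸ ha), hab⟩).reachable)

/-- A finite graph is P₄-free iff each connected component with at least two vertices is
isomorphic to the join of two nonempty P₄-free graphs. -/
theorem stmt1 {V : Type} [Fintype V] (G : SimpleGraph V) :
    P4Free G ↔ ∀ c : G.ConnectedComponent, c.supp.Nontrivial →
      ∃ (α β : Type) (H₁ : SimpleGraph α) (H₂ : SimpleGraph β),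
        Nonempty α ∧ Nonempty β ∧ P4Free H₁ ∧ P4Free H₂ ∧
        Nonempty (G.induce c.supp ≃g gJoin H₁ H₂) := by
  refine ⟨fun hP c hc => ?_, fun h => p4Free_of_forall_induce_supp fun c hc => ?_⟩
  · have : Nontrivial c.supp := Set.nontrivial_coe_sort.2 hc
    have hPc := hP.induce c.supp
    have hcompl := hPc.not_connected_compl c.connected_toSimpleGraph
    obtain ⟨A, ⟨a, ha⟩, ⟨b, hb⟩, e⟩ :=
      exists_iso_gJoin_of_not_preconnected_compl fun hpre => hcompl ⟨hpre⟩
    exact ⟨A, ↥Aᶜ, _, _, ⟨⟨a, ha⟩⟩, ⟨⟨b, hb⟩⟩, hPc.induce A, hPc.induce Aᶜ, e⟩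
  · obtain ⟨α, β, H₁, H₂, -, -, h₁, h₂, ⟨e⟩⟩ := h c hc
    exact (h₁.gJoin h₂).anti e.isIndContained
end

section
/- Let G be a connected P₄-free graph with dominating edge {v,w}, and with A = N(v) \ N[w], B = N(w) \ N[v], C = N(v) ∩ N(w). Define C₁ = {x ∈ C : A ⊆ N(x), B ⊄ N(x)}, C₂ = {x ∈ C : A ⊄ N(x), B ⊆ N(x)}, and C₃ = {x ∈ C : A ⊆ N(x), B ⊆ N(x)}. Then every vertex in C₁ is adjacent to every vertex in C₂, every vertex in C₁ is adjacent to every vertex in C₃, and every vertex in C₂ is adjacent to every vertex in C₃. -/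
open SimpleGraph

/-!
Each non-adjacency `x ≁ y` across two of the classes, together with the private neighbours in
`A` or `B` that distinguish the classes, produces an induced path on four vertices.
-/

namespace P4Free

variable {V : Type*} {G : SimpleGraph V}

theorem false_of_induced_path (h4 : P4Free G) {a b c d : V}
    (hab : G.Adj a b) (hbc : G.Adj b c) (hcd : G.Adj c d)
    (hac : ¬G.Adj a c) (hbd : ¬G.Adj b d) (had : ¬G.Adj a d) : False := by
  set f : Fin 4 → V := ![a, b, c, d]
  have hadj : ∀ i j, G.Adj (f i) (f j) ↔ (pathGraph 4).Adj i j := by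
    intro i j
    fin_cases i <;> fin_cases j <;>
      simp [f, pathGraph_adj, hab, hbc, hcd, hac, hbd, had, hab.symm, hbc.symm, hcd.symm,
        G.adj_comm d, G.adj_comm c a]
  -- distinct vertices of `P₄` have distinct neighbourhoods
  have htwins : ∀ i j : Fin 4, (∀ k, (pathGraph 4).Adj i k ↔ (pathGraph 4).Adj j k) → i = j := by
    simp only [pathGraph_adj]; decide
  have hinj : f.Injective := fun i j hij => htwins i j fun k => by rw [← hadj, ← hadj, hij]
  exact h4.elim ⟨⟨f, hinj⟩, hadj _ _⟩

theorem adj_of_common_neighbor (h4 : P4Free G) {x y z u : V}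
    (hxz : G.Adj x z) (hyz : G.Adj y z) (hyu : G.Adj y u)
    (hzu : ¬G.Adj z u) (hxu : ¬G.Adj x u) : G.Adj x y := by
  by_contra hxy
  exact h4.false_of_induced_path hyu.symm hyz hxz.symm (fun h => hzu h.symm) (fun h => hxy h.symm)
    (fun h => hxu h.symm)

theorem adj_of_private_neighbors (h4 : P4Free G) {x y z a b : V}
    (hxz : G.Adj x z) (hzb : G.Adj z b) (hza : ¬G.Adj z a)
    (hxa : G.Adj x a) (hxb : ¬G.Adj x b) (hyb : G.Adj y b) (hya : ¬G.Adj y a) :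
    G.Adj x y := by
  -- otherwise `a - x - z - b` or `x - a - b - y` is an induced `P₄`
  have hab : G.Adj a b := by
    by_contra hab
    exact hza (h4.adj_of_common_neighbor hxa.symm hxz.symm hzb hxb hab).symm
  by_contra hxy
  exact hxb (h4.adj_of_common_neighbor hxa hab.symm hyb.symm (fun h => hya h.symm) hxy)

end P4Free

theorem stmt4_general {V : Type} (G : SimpleGraph V)
    (h4 : P4Free G) (v w : V)
    (A B C C₁ C₂ C₃ : Set V)
    (hA : A = G.neighborSet v \ (G.neighborSet w ∪ {w}))
    (hB : B = G.neighborSet w \ (G.neighborSet v ∪ {v}))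
    (hC : C = G.neighborSet v ∩ G.neighborSet w)
    (hC₁ : C₁ = {x ∈ C | A ⊆ G.neighborSet x ∧ ¬ B ⊆ G.neighborSet x})
    (hC₂ : C₂ = {x ∈ C | ¬ A ⊆ G.neighborSet x ∧ B ⊆ G.neighborSet x})
    (hC₃ : C₃ = {x ∈ C | A ⊆ G.neighborSet x ∧ B ⊆ G.neighborSet x}) :
    (∀ x ∈ C₁, ∀ y ∈ C₂, G.Adj x y) ∧
    (∀ x ∈ C₁, ∀ y ∈ C₃, G.Adj x y) ∧
    (∀ x ∈ C₂, ∀ y ∈ C₃, G.Adj x y) := by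
  subst hA hB hC hC₁ hC₂ hC₃
  refine ⟨?_, ?_, ?_⟩
  · rintro x ⟨⟨-, hxw⟩, hxA, hxB⟩ y ⟨-, hyA, hyB⟩
    obtain ⟨b, hbB, hxb⟩ := Set.not_subset.1 hxB
    obtain ⟨a, haA, hya⟩ := Set.not_subset.1 hyA
    exact h4.adj_of_private_neighbors hxw.symm hbB.1 (fun h => haA.2 (Or.inl h)) (hxA haA) hxb
      (hyB hbB) hya
  · rintro x ⟨⟨hxv, -⟩, -, hxB⟩ y ⟨⟨hyv, -⟩, -, hyB⟩
    obtain ⟨b, hbB, hxb⟩ := Set.not_subset.1 hxB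
    exact h4.adj_of_common_neighbor hxv.symm hyv.symm (hyB hbB) (fun h => hbB.2 (Or.inl h)) hxb
  · rintro x ⟨⟨-, hxw⟩, hxA, -⟩ y ⟨⟨-, hyw⟩, hyA, -⟩
    obtain ⟨a, haA, hxa⟩ := Set.not_subset.1 hxA
    exact h4.adj_of_common_neighbor hxw.symm hyw.symm (hyA haA) (fun h => haA.2 (Or.inl h)) hxa

/-- In a connected P₄-free graph with dominating edge {v,w}, with C₁, C₂, C₃ the common
neighbors dominating A only, B only, or both, all vertices across distinct Cᵢ, Cⱼ are
adjacent. -/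
theorem stmt4 {V : Type} [Fintype V] (G : SimpleGraph V) (hc : G.Connected)
    (h4 : P4Free G) (v w : V) (hvw : G.Adj v w)
    (hdom : ∀ u, u ≠ v → u ≠ w → G.Adj u v ∨ G.Adj u w)
    (A B C C₁ C₂ C₃ : Set V)
    (hA : A = G.neighborSet v \ (G.neighborSet w ∪ {w}))
    (hB : B = G.neighborSet w \ (G.neighborSet v ∪ {v}))
    (hC : C = G.neighborSet v ∩ G.neighborSet w)
    (hC₁ : C₁ = {x ∈ C | A ⊆ G.neighborSet x ∧ ¬ B ⊆ G.neighborSet x})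
    (hC₂ : C₂ = {x ∈ C | ¬ A ⊆ G.neighborSet x ∧ B ⊆ G.neighborSet x})
    (hC₃ : C₃ = {x ∈ C | A ⊆ G.neighborSet x ∧ B ⊆ G.neighborSet x}) :
    (∀ x ∈ C₁, ∀ y ∈ C₂, G.Adj x y) ∧
    (∀ x ∈ C₁, ∀ y ∈ C₃, G.Adj x y) ∧
    (∀ x ∈ C₂, ∀ y ∈ C₃, G.Adj x y) :=
  stmt4_general G h4 v w A B C C₁ C₂ C₃ hA hB hC hC₁ hC₂ hC₃
end

section
/- Let G be a connected P₄-free graph and let T be a minimum connected dominating set of G (a connected dominating set of smallest size). Then |T| ≤ 2; that is, G[T] is a single vertex or a single edge. -/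
open SimpleGraph

/-!
Fix a vertex `a`. Every other vertex `u` is adjacent to `a` or shares a neighbour with it:
otherwise take such a `u` nearest to `a`, its successor `x` on a geodesic to `a`, and a common
neighbour `w` of `a` and `x`; then `a - w - x - u` is an induced `P₄`. For the non-neighbours `u`
of `a`, the sets of common neighbours of `a` and `u` form a chain under inclusion, since two
incomparable ones again span an induced `P₄`. A vertex of the smallest of these sets is adjacent
to every non-neighbour of `a`, so together with `a` it is a connected dominating set of size 2.
-/

namespace P4Free

variable {V : Type*} {G : SimpleGraph V}

theorem false_of_induced_path_s13 (h4 : P4Free G) {x₀ x₁ x₂ x₃ : V}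
    (h01 : G.Adj x₀ x₁) (h12 : G.Adj x₁ x₂) (h23 : G.Adj x₂ x₃)
    (h02 : ¬G.Adj x₀ x₂) (h03 : ¬G.Adj x₀ x₃) (h13 : ¬G.Adj x₁ x₃)
    (n02 : x₀ ≠ x₂) (n03 : x₀ ≠ x₃) (n13 : x₁ ≠ x₃) : False := by
  have n01 := h01.ne
  have n12 := h12.ne
  have n23 := h23.ne
  refine h4.false ⟨⟨![x₀, x₁, x₂, x₃], fun i j hij ↦ ?_⟩, fun {i j} ↦ ?_⟩
  · fin_cases i <;> fin_cases j <;> simp_all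
  · show G.Adj (![x₀, x₁, x₂, x₃] i) (![x₀, x₁, x₂, x₃] j) ↔ _
    fin_cases i <;> fin_cases j <;>
      simp [pathGraph_adj, h01, h12, h23, h01.symm, h12.symm, h23.symm, h02, h03, h13,
        mt G.adj_symm h02, mt G.adj_symm h03, mt G.adj_symm h13]

theorem exists_adj_adj_of_not_adj (h4 : P4Free G) (hc : G.Connected) {a u : V}
    (hua : u ≠ a) (hnua : ¬G.Adj u a) : ∃ w, G.Adj a w ∧ G.Adj w u := by
  induction hd : G.dist u a using Nat.strong_induction_on generalizing u with
  | _ n ih =>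
  by_contra! hno
  obtain ⟨p, hp⟩ := (hc u a).exists_walk_length_eq_dist
  cases p with
  | nil => exact hua rfl
  | @cons _ x _ hux q =>
  have hxa : x ≠ a := by rintro rfl; exact hnua hux
  have hnxa : ¬G.Adj x a := fun h ↦ hno x h.symm hux.symm
  have hxd : G.dist x a < n := by
    have := dist_le q
    rw [Walk.length_cons] at hp
    omega
  obtain ⟨w, haw, hwx⟩ := ih _ hxd hxa hnxa rfl
  exact h4.false_of_induced_path_s13 haw hwx hux.symm (mt G.adj_symm hnxa) (mt G.adj_symm hnua)
    (hno w haw) hxa.symm hua.symm (fun h ↦ hnua (h ▸ haw.symm))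

theorem adj_or_adj_of_adj_adj (h4 : P4Free G) {a u u' w w' : V}
    (hua : u ≠ a) (hnua : ¬G.Adj u a) (hu'a : u' ≠ a) (hnu'a : ¬G.Adj u' a)
    (haw : G.Adj a w) (hwu : G.Adj w u) (haw' : G.Adj a w') (hw'u' : G.Adj w' u') :
    G.Adj w u' ∨ G.Adj w' u := by
  by_contra! ⟨hnwu', hnw'u⟩
  have hu'w : u' ≠ w := fun h ↦ hnu'a (h ▸ haw.symm)
  have huw' : u ≠ w' := fun h ↦ hnua (h ▸ haw'.symm)
  by_cases huu' : G.Adj u u'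
  · exact h4.false_of_induced_path_s13 huu'.symm hwu.symm haw.symm (mt G.adj_symm hnwu') hnu'a hnua
      hu'w hu'a hua
  have hne : u ≠ u' := by rintro rfl; exact hnw'u hw'u'
  by_cases hww' : G.Adj w w'
  · exact h4.false_of_induced_path_s13 hwu.symm hww' hw'u' (mt G.adj_symm hnw'u) huu' hnwu' huw' hne
      hu'w.symm
  · exact h4.false_of_induced_path_s13 hwu.symm haw.symm haw' hnua (mt G.adj_symm hnw'u) hww' hua huw'
      (fun h ↦ hnw'u (h ▸ hwu))

theorem exists_dominating_neighbor [Finite V] [Nontrivial V] (h4 : P4Free G)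
    (hc : G.Connected) (a : V) : ∃ w, G.Adj a w ∧ ∀ u, u ≠ a → ¬G.Adj u a → G.Adj u w := by
  classical
  have := Fintype.ofFinite V
  let far : Finset V := {u | u ≠ a ∧ ¬G.Adj u a}
  let common (u : V) : Finset V := {w | G.Adj a w ∧ G.Adj w u}
  have mem_far {u : V} : u ∈ far ↔ u ≠ a ∧ ¬G.Adj u a := by simp [far]
  have mem_common {u w : V} : w ∈ common u ↔ G.Adj a w ∧ G.Adj w u := by simp [common]
  rcases far.eq_empty_or_nonempty with hfar | hfar
  · obtain ⟨w, haw⟩ := hc.preconnected.exists_adj_of_nontrivial a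
    refine ⟨w, haw, fun u hua hnua ↦ ?_⟩
    simpa [hfar] using mem_far.2 ⟨hua, hnua⟩
  obtain ⟨u₀, hu₀, hmin⟩ := far.exists_min_image (fun u ↦ (common u).card) hfar
  obtain ⟨hu₀a, hnu₀a⟩ := mem_far.1 hu₀
  obtain ⟨w, haw, hwu₀⟩ := h4.exists_adj_adj_of_not_adj hc hu₀a hnu₀a
  refine ⟨w, haw, fun u hua hnua ↦ ?_⟩
  by_contra hnuw
  have hsub : common u ⊆ common u₀ := fun w' hw' ↦ by
    obtain ⟨haw', hw'u⟩ := mem_common.1 hw'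
    refine mem_common.2 ⟨haw', ?_⟩
    exact (h4.adj_or_adj_of_adj_adj hu₀a hnu₀a hua hnua haw hwu₀ haw' hw'u).resolve_left
      (mt G.adj_symm hnuw)
  have heq := Finset.eq_of_subset_of_card_le hsub (hmin u (mem_far.2 ⟨hua, hnua⟩))
  exact hnuw (mem_common.1 (heq ▸ mem_common.2 ⟨haw, hwu₀⟩)).2.symm

end P4Free

theorem isConnDomSet_pair {V : Type*} {G : SimpleGraph V} {a b : V} (hab : G.Adj a b)
    (hdom : ∀ u, u ≠ a → ¬G.Adj u a → G.Adj u b) : IsConnDomSet G {a, b} := by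
  refine ⟨Set.insert_nonempty _ _, induce_pair_connected_of_adj hab, fun u hu ↦ ?_⟩
  simp only [Set.mem_insert_iff, Set.mem_singleton_iff, not_or] at hu
  by_cases hua : G.Adj u a
  · exact ⟨a, by simp, hua⟩
  · exact ⟨b, by simp, hdom u hu.1 hua⟩

/-- A minimum connected dominating set of a connected P₄-free graph has at most two
vertices. -/
theorem stmt13 {V : Type} [Fintype V] (G : SimpleGraph V) (hc : G.Connected)
    (h4 : P4Free G) (T : Set V) (hT : IsMinConnDomSet G T) :
    T.ncard ≤ 2 := by
  rcases subsingleton_or_nontrivial V with hV | hV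
  · exact (Set.ncard_le_one_iff_subsingleton.2 Set.subsingleton_of_subsingleton).trans one_le_two
  obtain ⟨a⟩ := hV.to_nonempty
  obtain ⟨b, hab, hdom⟩ := h4.exists_dominating_neighbor hc a
  calc T.ncard ≤ ({a, b} : Set V).ncard := hT.2 _ (isConnDomSet_pair hab hdom)
    _ ≤ 2 := (Set.ncard_insert_le a {b}).trans (by simp)
end
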